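/- Let h₁, …, h_T be i.i.d. Exp(1), λ > 0, and fixed positive constants a₁, …, a_T and γ. Define P(ρ) = Pr( Σ_{t=1}^{T} ρ·a_t·h_t·λ < γ ). Then −lim_{ρ→∞} log P(ρ)/log ρ = T, i.e., T-round HARQ-CC with maximum-ratio combining achieves full diversity order T. -/

import Mathlib

open MeasureTheory ProbabilityTheory Filter Finset

/-! The outage probability is squeezed between two constant multiples of `ρ ^ (-T)`. By
independence, the probability that every `h t` lies below a threshold `c t` is
`∏ t, (1 - exp (-c t))`, and `c / 2 ≤ 1 - exp (-c) ≤ c` for `0 ≤ c ≤ 1`. The outage event contains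
such a box with thresholds of order `1 / ρ` and, as the `h t` are almost surely nonnegative, is
almost surely contained in another one. Hence `log P(ρ) = -T log ρ + O(1)`. -/

namespace ProbabilityTheory

lemma ae_nonneg_expMeasure (r : ℝ) : ∀ᵐ x ∂expMeasure r, 0 ≤ x := by
  refine ae_iff.2 ?_
  simp only [not_le]
  change gammaMeasure 1 r (Set.Iio 0) = 0
  rw [gammaMeasure, withDensity_apply _ measurableSet_Iio]
  exact lintegral_gammaPDF_of_nonpos le_rfl

lemma expMeasure_real_Iic {r c : ℝ} (hr : 0 < r) (hc : 0 ≤ c) :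
    (expMeasure r).real (Set.Iic c) = 1 - Real.exp (-(r * c)) := by
  have := isProbabilityMeasure_expMeasure hr
  rw [← cdf_eq_real, cdf_expMeasure_eq hr, if_pos hc]

end ProbabilityTheory

lemma Real.one_sub_exp_neg_le (x : ℝ) : 1 - Real.exp (-x) ≤ x := by
  linarith [Real.add_one_le_exp (-x)]

lemma Real.div_two_le_one_sub_exp_neg {x : ℝ} (h0 : 0 ≤ x) (h1 : x ≤ 1) :
    x / 2 ≤ 1 - Real.exp (-x) :=
  calc x / 2 ≤ x / (1 + x) := by gcongr; linarith
    _ = 1 - (1 + x)⁻¹ := by field_simp; ring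
    _ ≤ 1 - Real.exp (-x) := by
      rw [Real.exp_neg]; gcongr; linarith [Real.add_one_le_exp x]

lemma Real.tendsto_neg_log_div_log_of_le_of_le {f : ℝ → ℝ} {c₁ c₂ d : ℝ} (hc₁ : 0 < c₁)
    (hc₂ : 0 < c₂) (hlow : ∀ᶠ x in atTop, c₁ * x ^ (-d) ≤ f x)
    (hup : ∀ᶠ x in atTop, f x ≤ c₂ * x ^ (-d)) :
    Tendsto (fun x => -(Real.log (f x) / Real.log x)) atTop (nhds d) := by
  have hlim (c : ℝ) : Tendsto (fun x => d - Real.log c / Real.log x) atTop (nhds d) := by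
    simpa using tendsto_const_nhds.sub (tendsto_const_nhds.div_atTop Real.tendsto_log_atTop)
  have hlog (c x : ℝ) (hc : 0 < c) (hx : 1 < x) :
      Real.log (c * x ^ (-d)) / Real.log x = Real.log c / Real.log x - d := by
    have hlogx := Real.log_pos hx
    rw [Real.log_mul hc.ne' (by positivity), Real.log_rpow (by linarith)]
    field_simp; ring
  refine tendsto_of_tendsto_of_tendsto_of_le_of_le' (hlim c₂) (hlim c₁) ?_ ?_
  · filter_upwards [hlow, hup, eventually_gt_atTop 1] with x hl hu hx
    have hpos : 0 < c₁ * x ^ (-d) := by positivity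
    have := div_le_div_of_nonneg_right (Real.log_le_log (hpos.trans_le hl) hu) (Real.log_pos hx).le
    rw [hlog c₂ x hc₂ hx] at this
    linarith
  · filter_upwards [hlow, eventually_gt_atTop 1] with x hl hx
    have hpos : 0 < c₁ * x ^ (-d) := by positivity
    have := div_le_div_of_nonneg_right (Real.log_le_log hpos hl) (Real.log_pos hx).le
    rw [hlog c₁ x hc₁ hx] at this
    linarith

lemma Finset.prod_div_mul_eq_mul_rpow_neg {ι : Type*} [Fintype ι] (k : ℝ) (b : ι → ℝ) {ρ : ℝ}
    (hρ : 0 ≤ ρ) :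
    ∏ t, k / (ρ * b t) = (∏ t, k / b t) * ρ ^ (-(Fintype.card ι : ℝ)) := by
  rw [Real.rpow_neg hρ, Real.rpow_natCast, ← Finset.card_univ, ← Finset.prod_const,
    ← Finset.prod_inv_distrib, ← Finset.prod_mul_distrib]
  refine Finset.prod_congr rfl fun t _ => ?_
  rw [mul_comm ρ, ← div_div, div_eq_mul_inv]

namespace ProbabilityTheory

variable {Ω ι : Type*} [MeasurableSpace Ω] [Fintype ι] {μ : Measure Ω} {h : ι → Ω → ℝ} {r : ℝ}

lemma ae_forall_nonneg_of_map_eq_expMeasure (hmeas : ∀ t, Measurable (h t))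
    (hlaw : ∀ t, μ.map (h t) = expMeasure r) : ∀ᵐ ω ∂μ, ∀ t, 0 ≤ h t ω :=
  ae_all_iff.2 fun t => ae_of_ae_map (hmeas t).aemeasurable <| by
    rw [hlaw t]; exact ae_nonneg_expMeasure r

lemma measureReal_iInter_Iic_of_iIndepFun_expMeasure (hmeas : ∀ t, Measurable (h t))
    (hindep : iIndepFun h μ) (hlaw : ∀ t, μ.map (h t) = expMeasure r) (hr : 0 < r)
    {c : ι → ℝ} (hc : ∀ t, 0 ≤ c t) :
    μ.real (⋂ t, h t ⁻¹' Set.Iic (c t)) = ∏ t, (1 - Real.exp (-(r * c t))) := by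
  rw [measureReal_def, hindep.meas_iInter fun t => ⟨Set.Iic (c t), measurableSet_Iic, rfl⟩,
    ENNReal.toReal_prod]
  refine Finset.prod_congr rfl fun t _ => ?_
  rw [← measureReal_def, ← map_measureReal_apply (hmeas t) measurableSet_Iic, hlaw t,
    expMeasure_real_Iic hr (hc t)]

lemma measureReal_sum_mul_lt_le_prod [IsFiniteMeasure μ] (hmeas : ∀ t, Measurable (h t))
    (hindep : iIndepFun h μ)
    (hlaw : ∀ t, μ.map (h t) = expMeasure r) (hr : 0 < r) {w : ι → ℝ} (hw : ∀ t, 0 < w t)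
    {γ : ℝ} (hγ : 0 ≤ γ) :
    μ.real {ω | ∑ t, w t * h t ω < γ} ≤ ∏ t, r * γ / w t := by
  have hc t : 0 ≤ γ / w t := div_nonneg hγ (hw t).le
  have hsub : {ω | ∑ t, w t * h t ω < γ} ≤ᵐ[μ] ⋂ t, h t ⁻¹' Set.Iic (γ / w t) := by
    filter_upwards [ae_forall_nonneg_of_map_eq_expMeasure hmeas hlaw] with ω hω hsum
    refine Set.mem_iInter.2 fun t => ?_
    have hterm : w t * h t ω ≤ ∑ s, w s * h s ω :=
      Finset.single_le_sum (fun s _ => mul_nonneg (hw s).le (hω s)) (Finset.mem_univ t)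
    change h t ω ≤ γ / w t
    rw [le_div_iff₀ (hw t), mul_comm]
    exact hterm.trans hsum.le
  calc μ.real {ω | ∑ t, w t * h t ω < γ}
      ≤ μ.real (⋂ t, h t ⁻¹' Set.Iic (γ / w t)) :=
        ENNReal.toReal_mono (measure_ne_top μ _) (measure_mono_ae hsub)
    _ = ∏ t, (1 - Real.exp (-(r * (γ / w t)))) :=
        measureReal_iInter_Iic_of_iIndepFun_expMeasure hmeas hindep hlaw hr hc
    _ ≤ ∏ t, r * γ / w t := by
        refine Finset.prod_le_prod (fun t _ => ?_) fun t _ => ?_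
        · have : 0 ≤ r * (γ / w t) := mul_nonneg hr.le (hc t)
          linarith [Real.exp_le_one_iff.2 (neg_nonpos.2 this)]
        · rw [mul_div_assoc]; exact Real.one_sub_exp_neg_le _

-- The thresholds `γ / ((n + 1) w t)` keep the weighted sum of `n` summands below `γ`.
lemma prod_le_measureReal_sum_mul_lt [IsFiniteMeasure μ] (hmeas : ∀ t, Measurable (h t))
    (hindep : iIndepFun h μ)
    (hlaw : ∀ t, μ.map (h t) = expMeasure r) (hr : 0 < r) {w : ι → ℝ} (hw : ∀ t, 0 < w t)
    {γ : ℝ} (hγ : 0 < γ) (hsmall : ∀ t, r * γ ≤ (Fintype.card ι + 1) * w t) :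
    ∏ t, r * γ / (2 * (Fintype.card ι + 1)) / w t ≤ μ.real {ω | ∑ t, w t * h t ω < γ} := by
  set n : ℝ := (Fintype.card ι : ℝ)
  have hn : 0 < n + 1 := by positivity
  set c : ι → ℝ := fun t => γ / ((n + 1) * w t)
  have hc t : 0 ≤ c t := div_nonneg hγ.le (mul_pos hn (hw t)).le
  have hsub : ⋂ t, h t ⁻¹' Set.Iic (c t) ⊆ {ω | ∑ t, w t * h t ω < γ} := by
    intro ω hω
    simp only [Set.mem_iInter, Set.mem_preimage, Set.mem_Iic] at hω
    have hterm t : w t * h t ω ≤ γ / (n + 1) := by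
      rw [mul_comm, ← le_div_iff₀ (hw t), div_div]
      exact hω t
    calc ∑ t, w t * h t ω ≤ ∑ _t : ι, γ / (n + 1) := Finset.sum_le_sum fun t _ => hterm t
      _ = n * (γ / (n + 1)) := by rw [Finset.sum_const, Finset.card_univ, nsmul_eq_mul]
      _ < γ := by rw [mul_div_assoc', div_lt_iff₀ hn]; linarith
  calc ∏ t, r * γ / (2 * (n + 1)) / w t = ∏ t, r * c t / 2 :=
        Finset.prod_congr rfl fun t _ => by simp only [c]; field_simp
    _ ≤ ∏ t, (1 - Real.exp (-(r * c t))) := by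
        have hrc t : 0 ≤ r * c t := mul_nonneg hr.le (hc t)
        refine Finset.prod_le_prod (fun t _ => div_nonneg (hrc t) two_pos.le) fun t _ => ?_
        refine Real.div_two_le_one_sub_exp_neg (hrc t) ?_
        rw [mul_div_assoc', div_le_one (mul_pos hn (hw t))]
        exact hsmall t
    _ = μ.real (⋂ t, h t ⁻¹' Set.Iic (c t)) :=
        (measureReal_iInter_Iic_of_iIndepFun_expMeasure hmeas hindep hlaw hr hc).symm
    _ ≤ μ.real {ω | ∑ t, w t * h t ω < γ} := measureReal_mono hsub

end ProbabilityTheory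

theorem diversity_order_T_general
    {Ω : Type*} [MeasurableSpace Ω] (μ : Measure Ω) [IsProbabilityMeasure μ]
    (T : ℕ) (h : Fin T → Ω → ℝ) (hmeas : ∀ t, Measurable (h t))
    (hindep : iIndepFun h μ)
    (hlaw : ∀ t, Measure.map (h t) μ = expMeasure 1)
    (a : Fin T → ℝ) (ha : ∀ t, 0 < a t) (lam γ : ℝ) (hlam : 0 < lam) (hγ : 0 < γ) :
    Tendsto (fun ρ : ℝ =>
        - (Real.log (μ {ω | ∑ t, ρ * a t * h t ω * lam < γ}).toReal / Real.log ρ))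
      atTop (nhds (T : ℝ)) := by
  set n : ℝ := (Fintype.card (Fin T) : ℝ)
  have hγ₁ : 0 < 1 * γ := by rwa [one_mul]
  have hb t : 0 < a t * lam := mul_pos (ha t) hlam
  have hw {ρ : ℝ} (hρ : 0 < ρ) t : 0 < ρ * (a t * lam) := mul_pos hρ (hb t)
  have houtage (ρ : ℝ) : (μ {ω | ∑ t, ρ * a t * h t ω * lam < γ}).toReal
      = μ.real {ω | ∑ t, ρ * (a t * lam) * h t ω < γ} := by
    simp only [measureReal_def, mul_assoc, mul_comm (h _ _) lam]
  have hsmall : ∀ᶠ ρ in atTop, ∀ t, 1 * γ ≤ (n + 1) * (ρ * (a t * lam)) :=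
    eventually_all.2 fun t => ((tendsto_id.atTop_mul_const (hb t)).const_mul_atTop
      (by positivity)).eventually_ge_atTop _
  have hdiv := Real.tendsto_neg_log_div_log_of_le_of_le (d := n)
    (f := fun ρ => μ.real {ω | ∑ t, ρ * (a t * lam) * h t ω < γ})
    (c₁ := ∏ t, 1 * γ / (2 * (n + 1)) / (a t * lam)) (c₂ := ∏ t, 1 * γ / (a t * lam))
    (prod_pos fun t _ => div_pos (by positivity) (hb t)) (prod_pos fun t _ => div_pos hγ₁ (hb t))
    ?_ ?_
  · simpa only [houtage, n, Fintype.card_fin] using hdiv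
  · filter_upwards [eventually_gt_atTop 0, hsmall] with ρ hρ hρsmall
    rw [← prod_div_mul_eq_mul_rpow_neg _ _ hρ.le]
    exact prod_le_measureReal_sum_mul_lt hmeas hindep hlaw one_pos (hw hρ) hγ hρsmall
  · filter_upwards [eventually_gt_atTop 0] with ρ hρ
    rw [← prod_div_mul_eq_mul_rpow_neg _ _ hρ.le]
    exact measureReal_sum_mul_lt_le_prod hmeas hindep hlaw one_pos (hw hρ) hγ.le

/-- `T`-round HARQ-CC with MRC achieves full diversity order `T`:
`-lim_{ρ→∞} log P(ρ)/log ρ = T`, where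
`P(ρ) = Pr(Σ_t ρ a_t h_t λ < γ)` with i.i.d. `h_t ~ Exp(1)`. -/
theorem diversity_order_T
    {Ω : Type*} [MeasurableSpace Ω] (μ : Measure Ω) [IsProbabilityMeasure μ]
    (T : ℕ) (hT : 0 < T) (h : Fin T → Ω → ℝ) (hmeas : ∀ t, Measurable (h t))
    (hindep : iIndepFun h μ)
    (hlaw : ∀ t, Measure.map (h t) μ = expMeasure 1)
    (a : Fin T → ℝ) (ha : ∀ t, 0 < a t) (lam γ : ℝ) (hlam : 0 < lam) (hγ : 0 < γ) :
    Tendsto (fun ρ : ℝ =>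
        - (Real.log (μ {ω | ∑ t, ρ * a t * h t ω * lam < γ}).toReal / Real.log ρ))
      atTop (nhds (T : ℝ)) :=
  diversity_order_T_general μ T h hmeas hindep hlaw a ha lam γ hlam hγ
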